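/- In a tangent category with negatives, if K : T²(M) → T(M) is a torsion-free affine vertical connection (cK = K), then for any vector fields w₁, w₂, s on M, R_K(w₁, w₂, s) = ∇²_K(w₁, w₂, s) − ∇²_K(w₂, w₁, s), where ∇²_K(w₁, w₂, s) := ∇_K(w₁, ∇_K(w₂, s)) − ∇_K(∇_K(w₁, w₂), s). -/
import Mathlib


open CategoryTheory CategoryTheory.Limits

open scoped Classical

universe v u

variable {C : Type u} [Category.{v} C]

/-- Chosen pullback: explicit pullback data for a cospan `f : A ⟶ Z ⟵ B : g`. -/
structure ChosenPB {A B Z : C} (f : A ⟶ Z) (g : B ⟶ Z) where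
  P : C
  pr0 : P ⟶ A
  pr1 : P ⟶ B
  comm : pr0 ≫ f = pr1 ≫ g
  pair : ∀ {X : C} (u : X ⟶ A) (v : X ⟶ B), u ≫ f = v ≫ g → (X ⟶ P)
  pair_pr0 : ∀ {X : C} (u : X ⟶ A) (v : X ⟶ B) (h : u ≫ f = v ≫ g),
    pair u v h ≫ pr0 = u
  pair_pr1 : ∀ {X : C} (u : X ⟶ A) (v : X ⟶ B) (h : u ≫ f = v ≫ g),
    pair u v h ≫ pr1 = v
  hom_ext : ∀ {X : C} (w w' : X ⟶ P),
    w ≫ pr0 = w' ≫ pr0 → w ≫ pr1 = w' ≫ pr1 → w = w'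

/-- Witness that the endofunctor `T` preserves the chosen pullback `PB`. -/
structure PBLift (T : C ⥤ C) {A B Z : C} {f : A ⟶ Z} {g : B ⟶ Z} (PB : ChosenPB f g) where
  pair : ∀ {X : C} (u : X ⟶ T.obj A) (v : X ⟶ T.obj B),
    u ≫ T.map f = v ≫ T.map g → (X ⟶ T.obj PB.P)
  pair_pr0 : ∀ {X : C} (u : X ⟶ T.obj A) (v : X ⟶ T.obj B)
    (h : u ≫ T.map f = v ≫ T.map g), pair u v h ≫ T.map PB.pr0 = u
  pair_pr1 : ∀ {X : C} (u : X ⟶ T.obj A) (v : X ⟶ T.obj B)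
    (h : u ≫ T.map f = v ≫ T.map g), pair u v h ≫ T.map PB.pr1 = v
  hom_ext : ∀ {X : C} (w w' : X ⟶ T.obj PB.P),
    w ≫ T.map PB.pr0 = w' ≫ T.map PB.pr0 → w ≫ T.map PB.pr1 = w' ≫ T.map PB.pr1 → w = w'

/-- The image of a preserved chosen pullback is again a chosen pullback. -/
def PBLift.toChosenPB {T : C ⥤ C} {A B Z : C} {f : A ⟶ Z} {g : B ⟶ Z} {PB : ChosenPB f g}
    (L : PBLift T PB) : ChosenPB (T.map f) (T.map g) where
  P := T.obj PB.P
  pr0 := T.map PB.pr0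
  pr1 := T.map PB.pr1
  comm := by rw [← T.map_comp, ← T.map_comp, PB.comm]
  pair := L.pair
  pair_pr0 := L.pair_pr0
  pair_pr1 := L.pair_pr1
  hom_ext := L.hom_ext

/-- Iterated endofunctor `Tⁿ`. -/
def fpow (T : C ⥤ C) : ℕ → C ⥤ C
  | 0 => 𝟭 C
  | n + 1 => fpow T n ⋙ T

/-- A tangent category in the sense of Cockett–Cruttwell, presented with chosen
pullbacks `T₂M` of `p_M` along itself (preserved by each `Tⁿ`), addition `+`,
projection `p`, zero `0`, vertical lift `ℓ` and canonical flip `c`, together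
with the universality of the vertical lift. Sums, associativity etc. are
expressed in generalized-element form via the chosen pullback pairings. -/
structure TangentCat (C : Type u) [Category.{v} C] where
  T : C ⥤ C
  p : T ⟶ 𝟭 C
  zero : 𝟭 C ⟶ T
  l : T ⟶ T ⋙ T
  c : T ⋙ T ⟶ T ⋙ T
  T2 : ∀ M : C, ChosenPB (p.app M) (p.app M)
  T2T : ∀ M : C, PBLift T (T2 M)
  T2Tn : ∀ (M : C) (n : ℕ), PBLift (fpow T n) (T2 M)
  add : ∀ M : C, (T2 M).P ⟶ T.obj M
  add_nat : ∀ {M N : C} (f : M ⟶ N) {X : C} (u v : X ⟶ T.obj M)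
    (h : u ≫ p.app M = v ≫ p.app M)
    (h' : (u ≫ T.map f) ≫ p.app N = (v ≫ T.map f) ≫ p.app N),
    (T2 M).pair u v h ≫ add M ≫ T.map f
      = (T2 N).pair (u ≫ T.map f) (v ≫ T.map f) h' ≫ add N
  zero_p : ∀ M : C, zero.app M ≫ p.app M = 𝟙 M
  add_p : ∀ M : C, add M ≫ p.app M = (T2 M).pr0 ≫ p.app M
  add_comm' : ∀ (M : C) {X : C} (f g : X ⟶ T.obj M) (h : f ≫ p.app M = g ≫ p.app M),
    (T2 M).pair f g h ≫ add M = (T2 M).pair g f h.symm ≫ add M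
  add_assoc' : ∀ (M : C) {X : C} (f g k : X ⟶ T.obj M)
    (h1 : f ≫ p.app M = g ≫ p.app M) (h2 : g ≫ p.app M = k ≫ p.app M)
    (h3 : ((T2 M).pair f g h1 ≫ add M) ≫ p.app M = k ≫ p.app M)
    (h4 : f ≫ p.app M = ((T2 M).pair g k h2 ≫ add M) ≫ p.app M),
    (T2 M).pair ((T2 M).pair f g h1 ≫ add M) k h3 ≫ add M
      = (T2 M).pair f ((T2 M).pair g k h2 ≫ add M) h4 ≫ add M
  add_zero' : ∀ (M : C) {X : C} (f : X ⟶ T.obj M)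
    (h : f ≫ p.app M = (f ≫ p.app M ≫ zero.app M) ≫ p.app M),
    (T2 M).pair f (f ≫ p.app M ≫ zero.app M) h ≫ add M = f
  l_Tp : ∀ M : C, l.app M ≫ T.map (p.app M) = p.app M ≫ zero.app M
  l_zero : ∀ M : C, zero.app M ≫ l.app M = zero.app M ≫ T.map (zero.app M)
  l_add : ∀ (M : C) {X : C} (f g : X ⟶ T.obj M) (h : f ≫ p.app M = g ≫ p.app M),
    ∃ w : X ⟶ T.obj (T2 M).P,
      w ≫ T.map (T2 M).pr0 = f ≫ l.app M ∧ w ≫ T.map (T2 M).pr1 = g ≫ l.app M ∧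
      (T2 M).pair f g h ≫ add M ≫ l.app M = w ≫ T.map (add M)
  c_p : ∀ M : C, c.app M ≫ p.app (T.obj M) = T.map (p.app M)
  c_zero : ∀ M : C, T.map (zero.app M) ≫ c.app M = zero.app (T.obj M)
  c_add : ∀ (M : C) {X : C} (u v : X ⟶ T.obj (T.obj M))
    (h : u ≫ T.map (p.app M) = v ≫ T.map (p.app M))
    (h' : (u ≫ c.app M) ≫ p.app (T.obj M) = (v ≫ c.app M) ≫ p.app (T.obj M)),
    ∃ w : X ⟶ T.obj (T2 M).P,
      w ≫ T.map (T2 M).pr0 = u ∧ w ≫ T.map (T2 M).pr1 = v ∧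
      w ≫ T.map (add M) ≫ c.app M
        = (T2 (T.obj M)).pair (u ≫ c.app M) (v ≫ c.app M) h' ≫ add (T.obj M)
  l_c : ∀ M : C, l.app M ≫ c.app M = l.app M
  c_c : ∀ M : C, c.app M ≫ c.app M = 𝟙 (T.obj (T.obj M))
  l_l : ∀ M : C, l.app M ≫ T.map (l.app M) = l.app M ≫ l.app (T.obj M)
  c_T_c : ∀ M : C, c.app (T.obj M) ≫ T.map (c.app M) ≫ c.app (T.obj M)
    = T.map (c.app M) ≫ c.app (T.obj M) ≫ T.map (c.app M)
  l_T_c : ∀ M : C, l.app (T.obj M) ≫ T.map (c.app M) ≫ c.app (T.obj M)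
    = c.app M ≫ T.map (l.app M)
  vmu : ∀ M : C, (T2 M).P ⟶ T.obj (T.obj M)
  vmu_spec : ∀ M : C, ∃ w : (T2 M).P ⟶ T.obj (T2 M).P,
    w ≫ T.map (T2 M).pr0 = (T2 M).pr0 ≫ l.app M ∧
    w ≫ T.map (T2 M).pr1 = (T2 M).pr1 ≫ zero.app (T.obj M) ∧
    vmu M = w ≫ T.map (add M)
  vlift : ∀ {X M : C} (f : X ⟶ T.obj (T.obj M)),
    f ≫ T.map (p.app M) = f ≫ T.map (p.app M) ≫ p.app M ≫ zero.app M → (X ⟶ (T2 M).P)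
  vlift_vmu : ∀ {X M : C} (f : X ⟶ T.obj (T.obj M))
    (h : f ≫ T.map (p.app M) = f ≫ T.map (p.app M) ≫ p.app M ≫ zero.app M),
    vlift f h ≫ vmu M = f
  vmu_mono : ∀ {X M : C} (w w' : X ⟶ (T2 M).P), w ≫ vmu M = w' ≫ vmu M → w = w'

/-- Negatives: each tangent bundle is a commutative group bundle. -/
structure HasNegatives {C : Type u} [Category.{v} C] (D : TangentCat C) where
  neg : ∀ M : C, D.T.obj M ⟶ D.T.obj M
  neg_p : ∀ M : C, neg M ≫ D.p.app M = D.p.app M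
  neg_add : ∀ (M : C) {X : C} (f : X ⟶ D.T.obj M)
    (h : f ≫ D.p.app M = (f ≫ neg M) ≫ D.p.app M),
    (D.T2 M).pair f (f ≫ neg M) h ≫ D.add M = f ≫ D.p.app M ≫ D.zero.app M

/-- Fibrewise sum of two maps into a tangent bundle (defined when the maps
agree under `p`; otherwise a default value). -/
noncomputable def TangentCat.hadd (D : TangentCat C) {X M : C}
    (f g : X ⟶ D.T.obj M) : X ⟶ D.T.obj M :=
  if h : f ≫ D.p.app M = g ≫ D.p.app M then (D.T2 M).pair f g h ≫ D.add M else f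

/-- Fibrewise difference `f - g` of two maps into a tangent bundle. -/
noncomputable def TangentCat.sub (D : TangentCat C) (N : HasNegatives D) {X M : C}
    (f g : X ⟶ D.T.obj M) : X ⟶ D.T.obj M :=
  D.hadd f (g ≫ N.neg M)

/-- The bracketing operation `{f}` for the tangent bundle, obtained from the
universality (equalizer property) of the vertical lift. -/
noncomputable def TangentCat.brkT (D : TangentCat C) {X M : C}
    (f : X ⟶ D.T.obj (D.T.obj M)) : X ⟶ D.T.obj M :=
  if h : f ≫ D.T.map (D.p.app M) = f ≫ D.T.map (D.p.app M) ≫ D.p.app M ≫ D.zero.app M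
  then D.vlift f h ≫ (D.T2 M).pr0 else f ≫ D.p.app (D.T.obj M)

/-- The Lie bracket of vector fields: `[w₁,w₂] = {w₁T(w₂) − w₂T(w₁)c}`. -/
noncomputable def TangentCat.lie (D : TangentCat C) (N : HasNegatives D) {M : C}
    (w1 w2 : M ⟶ D.T.obj M) : M ⟶ D.T.obj M :=
  D.brkT (D.sub N (w1 ≫ D.T.map w2) (w2 ≫ D.T.map w1 ≫ D.c.app M))

/-- A differential bundle `𝗊 = (q, +_q, 0_q, λ)` on `E` over `M` in the tangent
category `D`, with chosen pullbacks `E₂` (of `q` along itself) and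
`T(M) ×_M E` (of `p_M` along `q`), both preserved by each `Tⁿ`, together with
the lift axioms and the universality of the lift (in equalizer form). -/
structure DiffBundle {C : Type u} [Category.{v} C] (D : TangentCat C) (E M : C) where
  q : E ⟶ M
  E2 : ChosenPB q q
  TE2 : PBLift D.T E2
  TE2n : ∀ n : ℕ, PBLift (fpow D.T n) E2
  P : ChosenPB (D.p.app M) q
  TP : PBLift D.T P
  TPn : ∀ n : ℕ, PBLift (fpow D.T n) P
  addq : E2.P ⟶ E
  zeroq : M ⟶ E
  lam : E ⟶ D.T.obj E
  addq_q : addq ≫ q = E2.pr0 ≫ q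
  zeroq_q : zeroq ≫ q = 𝟙 M
  addq_comm : ∀ {X : C} (f g : X ⟶ E) (h : f ≫ q = g ≫ q),
    E2.pair f g h ≫ addq = E2.pair g f h.symm ≫ addq
  addq_assoc : ∀ {X : C} (f g k : X ⟶ E)
    (h1 : f ≫ q = g ≫ q) (h2 : g ≫ q = k ≫ q)
    (h3 : (E2.pair f g h1 ≫ addq) ≫ q = k ≫ q)
    (h4 : f ≫ q = (E2.pair g k h2 ≫ addq) ≫ q),
    E2.pair (E2.pair f g h1 ≫ addq) k h3 ≫ addq
      = E2.pair f (E2.pair g k h2 ≫ addq) h4 ≫ addq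
  addq_zero : ∀ {X : C} (f : X ⟶ E) (h : f ≫ q = (f ≫ q ≫ zeroq) ≫ q),
    E2.pair f (f ≫ q ≫ zeroq) h ≫ addq = f
  lam_Tq : lam ≫ D.T.map q = q ≫ D.zero.app M
  lam_zero1 : zeroq ≫ lam = D.zero.app M ≫ D.T.map zeroq
  lam_add1 : ∀ {X : C} (f g : X ⟶ E) (h : f ≫ q = g ≫ q),
    ∃ w : X ⟶ D.T.obj E2.P,
      w ≫ D.T.map E2.pr0 = f ≫ lam ∧ w ≫ D.T.map E2.pr1 = g ≫ lam ∧
      E2.pair f g h ≫ addq ≫ lam = w ≫ D.T.map addq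
  lam_p : lam ≫ D.p.app E = q ≫ zeroq
  lam_zero2 : zeroq ≫ lam = zeroq ≫ D.zero.app E
  lam_add2 : ∀ {X : C} (f g : X ⟶ E) (h : f ≫ q = g ≫ q)
    (h' : (f ≫ lam) ≫ D.p.app E = (g ≫ lam) ≫ D.p.app E),
    E2.pair f g h ≫ addq ≫ lam = (D.T2 E).pair (f ≫ lam) (g ≫ lam) h' ≫ D.add E
  lam_l : lam ≫ D.l.app E = lam ≫ D.T.map lam
  mu : E2.P ⟶ D.T.obj E
  mu_spec : ∃ w : E2.P ⟶ D.T.obj E2.P,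
    w ≫ D.T.map E2.pr0 = E2.pr0 ≫ lam ∧
    w ≫ D.T.map E2.pr1 = E2.pr1 ≫ D.zero.app E ∧
    mu = w ≫ D.T.map addq
  muLift : ∀ {X : C} (f : X ⟶ D.T.obj E),
    f ≫ D.T.map q = f ≫ D.p.app E ≫ q ≫ D.zero.app M → (X ⟶ E2.P)
  muLift_mu : ∀ {X : C} (f : X ⟶ D.T.obj E)
    (h : f ≫ D.T.map q = f ≫ D.p.app E ≫ q ≫ D.zero.app M),
    muLift f h ≫ mu = f
  muLift_q : ∀ {X : C} (f : X ⟶ D.T.obj E)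
    (h : f ≫ D.T.map q = f ≫ D.p.app E ≫ q ≫ D.zero.app M),
    muLift f h ≫ E2.pr0 ≫ q = f ≫ D.p.app E ≫ q
  mu_mono : ∀ {X : C} (w w' : X ⟶ E2.P), w ≫ mu = w' ≫ mu → w = w'

/-- The bracketing operation `{f}` for a differential bundle. -/
noncomputable def DiffBundle.brk {D : TangentCat C} {E M : C} (B : DiffBundle D E M)
    {X : C} (f : X ⟶ D.T.obj E) : X ⟶ E :=
  if h : f ≫ D.T.map B.q = f ≫ D.p.app E ≫ B.q ≫ D.zero.app M
  then B.muLift f h ≫ B.E2.pr0 else f ≫ D.p.app E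

/-- Negatives for a differential bundle (the fibrewise group structure). -/
structure BundleNegatives {D : TangentCat C} {E M : C} (B : DiffBundle D E M) where
  neg : E ⟶ E
  neg_q : neg ≫ B.q = B.q
  neg_add : ∀ {X : C} (f : X ⟶ E) (h : f ≫ B.q = (f ≫ neg) ≫ B.q),
    B.E2.pair f (f ≫ neg) h ≫ B.addq = f ≫ B.q ≫ B.zeroq

/-- Fibrewise sum of maps into `E` for the bundle addition `+_q`. -/
noncomputable def DiffBundle.qadd {D : TangentCat C} {E M : C} (B : DiffBundle D E M)
    {X : C} (f g : X ⟶ E) : X ⟶ E :=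
  if h : f ≫ B.q = g ≫ B.q then B.E2.pair f g h ≫ B.addq else f

/-- Fibrewise difference of maps into `E` for the bundle addition `+_q`. -/
noncomputable def DiffBundle.qsub {D : TangentCat C} {E M : C} (B : DiffBundle D E M)
    (NB : BundleNegatives B) {X : C} (f g : X ⟶ E) : X ⟶ E :=
  B.qadd f (g ≫ NB.neg)

/-- The horizontal descent `U = ⟨T(q), p⟩ : T(E) ⟶ T(M) ×_M E`. -/
def TangentCat.hdesc (D : TangentCat C) {E M : C} (q : E ⟶ M)
    (P : ChosenPB (D.p.app M) q) : D.T.obj E ⟶ P.P :=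
  P.pair (D.T.map q) (D.p.app E) (by simpa using D.p.naturality q)

/-- A vertical connection on the differential bundle with projection `q` and
lift `lam`: a retraction `K` of `lam` with `Kq = pq`, `Kλ = ℓT(K)` and
`Kλ = T(λ)cT(K)` (equivalently, `(K,p)` and `(K,q)` are linear bundle
morphisms). -/
def IsVerticalConnection (D : TangentCat C) {E M : C} (q : E ⟶ M)
    (lam : E ⟶ D.T.obj E) (K : D.T.obj E ⟶ E) : Prop :=
  lam ≫ K = 𝟙 E ∧
  K ≫ q = D.p.app E ≫ q ∧
  K ≫ lam = D.l.app E ≫ D.T.map K ∧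
  K ≫ lam = D.T.map lam ≫ D.c.app E ≫ D.T.map K

/-- Flatness of a vertical connection: `cT(K)K = T(K)K`. -/
def IsFlat (D : TangentCat C) {E : C} (K : D.T.obj E ⟶ E) : Prop :=
  D.c.app E ≫ D.T.map K ≫ K = D.T.map K ≫ K

/-- A horizontal connection on the differential bundle with projection `q`,
lift `lam` and horizontal pullback `P = T(M) ×_M E`: a section `H` of the
horizontal descent `U = ⟨T(q),p⟩` with `Hℓ = (ℓ×0)T(H)` and
`HT(λ)c = (0×λ)T(H)` (equivalently, `(H,1)` is linear into `p_E` and into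
`T(𝗊)`). -/
def IsHorizontalConnection (D : TangentCat C) {E M : C} (q : E ⟶ M)
    (lam : E ⟶ D.T.obj E) (P : ChosenPB (D.p.app M) q)
    (H : P.P ⟶ D.T.obj E) : Prop :=
  H ≫ D.T.map q = P.pr0 ∧
  H ≫ D.p.app E = P.pr1 ∧
  (∃ w : P.P ⟶ D.T.obj P.P,
    w ≫ D.T.map P.pr0 = P.pr0 ≫ D.l.app M ∧
    w ≫ D.T.map P.pr1 = P.pr1 ≫ D.zero.app E ∧
    H ≫ D.l.app E = w ≫ D.T.map H) ∧
  (∃ w : P.P ⟶ D.T.obj P.P,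
    w ≫ D.T.map P.pr0 = P.pr0 ≫ D.zero.app (D.T.obj M) ∧
    w ≫ D.T.map P.pr1 = P.pr1 ≫ lam ∧
    H ≫ D.T.map lam ≫ D.c.app E = w ≫ D.T.map H)

/-- A (full) connection, in unbundled form: a vertical connection `K` and a
horizontal connection `H` with `HK = π₁q0_q` and `⟨K,p⟩μ + UH = 1`. -/
noncomputable def IsConnectionPair (D : TangentCat C) {E M : C} (q : E ⟶ M)
    (lam : E ⟶ D.T.obj E) (EP : ChosenPB q q) (zeroq : M ⟶ E)
    (mu : EP.P ⟶ D.T.obj E) (P : ChosenPB (D.p.app M) q)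
    (K : D.T.obj E ⟶ E) (H : P.P ⟶ D.T.obj E) : Prop :=
  IsVerticalConnection D q lam K ∧
  IsHorizontalConnection D q lam P H ∧
  H ≫ K = P.pr1 ≫ q ≫ zeroq ∧
  ∃ R : D.T.obj E ⟶ EP.P, R ≫ EP.pr0 = K ∧ R ≫ EP.pr1 = D.p.app E ∧
    D.hadd (R ≫ mu) (D.hdesc q P ≫ H) = 𝟙 (D.T.obj E)

/-- A connection on a differential bundle. -/
noncomputable def IsConnection {D : TangentCat C} {E M : C} (B : DiffBundle D E M)
    (K : D.T.obj E ⟶ E) (H : B.P.P ⟶ D.T.obj E) : Prop :=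
  IsConnectionPair D B.q B.lam B.E2 B.zeroq B.mu B.P K H

/-- A Finsler connection on a differential bundle. -/
def IsFinslerConnection {D : TangentCat C} {E M : C} (B : DiffBundle D E M)
    (R : D.T.obj E ⟶ B.E2.P) : Prop :=
  B.mu ≫ R = 𝟙 B.E2.P ∧
  R ≫ B.E2.pr1 = D.p.app E ∧
  R ≫ B.E2.pr0 ≫ B.lam = D.T.map B.lam ≫ D.c.app E ≫ D.T.map (R ≫ B.E2.pr0) ∧
  D.l.app E ≫ D.T.map (R ≫ B.E2.pr0) = R ≫ B.E2.pr0 ≫ B.lam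

/-- The covariant derivative `∇_K(w,s) = wT(s)K`. -/
def nabla (D : TangentCat C) {E M : C} (K : D.T.obj E ⟶ E)
    (w : M ⟶ D.T.obj M) (s : M ⟶ E) : M ⟶ E :=
  w ≫ D.T.map s ≫ K

/-! ### Auxiliary development for Statement 7 -/

namespace Stmt7Aux

theorem pb_pair_comp {A B Z X Y : C} {f : A ⟶ Z} {g : B ⟶ Z} (PB : ChosenPB f g)
    (e : Y ⟶ X) (u : X ⟶ A) (v : X ⟶ B) (h : u ≫ f = v ≫ g) :
    e ≫ PB.pair u v h
      = PB.pair (e ≫ u) (e ≫ v) (by rw [Category.assoc, h, Category.assoc]) :=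
  PB.hom_ext _ _ (by rw [Category.assoc, PB.pair_pr0, PB.pair_pr0])
    (by rw [Category.assoc, PB.pair_pr1, PB.pair_pr1])

theorem pb_pair_congr {A B Z X : C} {f : A ⟶ Z} {g : B ⟶ Z} (PB : ChosenPB f g)
    {u u' : X ⟶ A} {v v' : X ⟶ B} (hu : u = u') (hv : v = v')
    (h : u ≫ f = v ≫ g) (h' : u' ≫ f = v' ≫ g) :
    PB.pair u v h = PB.pair u' v' h' := by subst hu; subst hv; rfl

theorem lift_pair_congr {T : C ⥤ C} {A B Z : C} {f : A ⟶ Z} {g : B ⟶ Z}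
    {PB : ChosenPB f g} (L : PBLift T PB) {X : C}
    {u u' : X ⟶ T.obj A} {v v' : X ⟶ T.obj B} (hu : u = u') (hv : v = v')
    (h : u ≫ T.map f = v ≫ T.map g) (h' : u' ≫ T.map f = v' ≫ T.map g) :
    L.pair u v h = L.pair u' v' h' := by subst hu; subst hv; rfl

variable (D : TangentCat C)

theorem p_nat {A B : C} (f : A ⟶ B) :
    D.T.map f ≫ D.p.app B = D.p.app A ≫ f := by
  simpa using D.p.naturality f

theorem zero_nat {A B : C} (f : A ⟶ B) :
    f ≫ D.zero.app B = D.zero.app A ≫ D.T.map f := by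
  simpa using D.zero.naturality f

theorem l_nat {A B : C} (f : A ⟶ B) :
    D.T.map f ≫ D.l.app B = D.l.app A ≫ D.T.map (D.T.map f) := by
  simpa using D.l.naturality f

theorem c_nat {A B : C} (f : A ⟶ B) :
    D.T.map (D.T.map f) ≫ D.c.app B = D.c.app A ≫ D.T.map (D.T.map f) := by
  simpa using D.c.naturality f


theorem p_nat_assoc {A B W : C} (f : A ⟶ B) (g : (𝟭 C).obj B ⟶ W) :
    D.T.map f ≫ D.p.app B ≫ g = D.p.app A ≫ f ≫ g := by
  rw [← Category.assoc, p_nat D f, Category.assoc]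

theorem zero_nat_assoc {A B W : C} (f : A ⟶ B) (g : D.T.obj B ⟶ W) :
    f ≫ D.zero.app B ≫ g = D.zero.app A ≫ D.T.map f ≫ g := by
  rw [← Category.assoc, zero_nat D f, Category.assoc]

theorem l_nat_assoc {A B W : C} (f : A ⟶ B) (g : D.T.obj (D.T.obj B) ⟶ W) :
    D.T.map f ≫ D.l.app B ≫ g = D.l.app A ≫ D.T.map (D.T.map f) ≫ g := by
  rw [← Category.assoc, l_nat D f, Category.assoc]

theorem c_nat_assoc {A B W : C} (f : A ⟶ B) (g : D.T.obj (D.T.obj B) ⟶ W) :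
    D.T.map (D.T.map f) ≫ D.c.app B ≫ g = D.c.app A ≫ D.T.map (D.T.map f) ≫ g := by
  rw [← Category.assoc, c_nat D f, Category.assoc]

theorem zero_p_assoc {A W : C} (g : (𝟭 C).obj A ⟶ W) :
    D.zero.app A ≫ D.p.app A ≫ g = g := by
  rw [← Category.assoc, D.zero_p]
  exact Category.id_comp g

theorem l_Tp_assoc {A W : C} (g : D.T.obj A ⟶ W) :
    D.l.app A ≫ D.T.map (D.p.app A) ≫ g = D.p.app A ≫ D.zero.app A ≫ g := by
  rw [← Category.assoc, D.l_Tp, Category.assoc]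

theorem c_p_assoc {A W : C} (g : D.T.obj A ⟶ W) :
    D.c.app A ≫ D.p.app (D.T.obj A) ≫ g = D.T.map (D.p.app A) ≫ g := by
  rw [← Category.assoc, D.c_p]

theorem l_c_assoc {A W : C} (g : D.T.obj (D.T.obj A) ⟶ W) :
    D.l.app A ≫ D.c.app A ≫ g = D.l.app A ≫ g := by
  rw [← Category.assoc, D.l_c]

theorem c_c_assoc {A W : C} (g : D.T.obj (D.T.obj A) ⟶ W) :
    D.c.app A ≫ D.c.app A ≫ g = g := by
  rw [← Category.assoc, D.c_c]
  exact Category.id_comp g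

theorem hadd_of {X A : C} (f g : X ⟶ D.T.obj A) (h : f ≫ D.p.app A = g ≫ D.p.app A) :
    D.hadd f g = (D.T2 A).pair f g h ≫ D.add A := dif_pos h

theorem hadd_p {X A : C} (f g : X ⟶ D.T.obj A) (h : f ≫ D.p.app A = g ≫ D.p.app A) :
    D.hadd f g ≫ D.p.app A = f ≫ D.p.app A := by
  rw [hadd_of D f g h, Category.assoc, D.add_p, ← Category.assoc, (D.T2 A).pair_pr0]

theorem comp_hadd {Y X A : C} (e : Y ⟶ X) (f g : X ⟶ D.T.obj A)
    (h : f ≫ D.p.app A = g ≫ D.p.app A) :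
    e ≫ D.hadd f g = D.hadd (e ≫ f) (e ≫ g) := by
  rw [hadd_of D f g h, hadd_of D (e ≫ f) (e ≫ g)
      (by rw [Category.assoc, h, Category.assoc]),
    ← Category.assoc, pb_pair_comp]

theorem hadd_comm {X A : C} (f g : X ⟶ D.T.obj A) (h : f ≫ D.p.app A = g ≫ D.p.app A) :
    D.hadd f g = D.hadd g f := by
  rw [hadd_of D f g h, hadd_of D g f h.symm, D.add_comm' A f g h]

theorem hadd_assoc {X A : C} (f g k : X ⟶ D.T.obj A)
    (h1 : f ≫ D.p.app A = g ≫ D.p.app A) (h2 : g ≫ D.p.app A = k ≫ D.p.app A) :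
    D.hadd (D.hadd f g) k = D.hadd f (D.hadd g k) := by
  have hfg : D.hadd f g ≫ D.p.app A = k ≫ D.p.app A := by
    rw [hadd_p D f g h1, h1, h2]
  have hgk : f ≫ D.p.app A = D.hadd g k ≫ D.p.app A := by
    rw [hadd_p D g k h2, h1]
  have h3 : ((D.T2 A).pair f g h1 ≫ D.add A) ≫ D.p.app A = k ≫ D.p.app A := by
    rw [← hadd_of D f g h1]; exact hfg
  have h4 : f ≫ D.p.app A = ((D.T2 A).pair g k h2 ≫ D.add A) ≫ D.p.app A := by
    rw [← hadd_of D g k h2]; exact hgk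
  rw [hadd_of D (D.hadd f g) k hfg, hadd_of D f (D.hadd g k) hgk,
    pb_pair_congr (D.T2 A) (hadd_of D f g h1) rfl hfg h3,
    pb_pair_congr (D.T2 A) rfl (hadd_of D g k h2) hgk h4]
  exact D.add_assoc' A f g k h1 h2 h3 h4

theorem hadd_zero_right {X A : C} (f z : X ⟶ D.T.obj A)
    (hz : z = f ≫ D.p.app A ≫ D.zero.app A) : D.hadd f z = f := by
  subst hz
  have h : f ≫ D.p.app A = (f ≫ D.p.app A ≫ D.zero.app A) ≫ D.p.app A := by
    simp only [Category.assoc, D.zero_p, Functor.id_obj, Category.comp_id]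
  rw [hadd_of D _ _ h]
  exact D.add_zero' A f h

variable (N : HasNegatives D)

theorem neg_p {X A : C} (g : X ⟶ D.T.obj A) :
    (g ≫ N.neg A) ≫ D.p.app A = g ≫ D.p.app A := by
  rw [Category.assoc, N.neg_p]

theorem hadd_neg {X A : C} (f : X ⟶ D.T.obj A) :
    D.hadd f (f ≫ N.neg A) = f ≫ D.p.app A ≫ D.zero.app A := by
  rw [hadd_of D f _ (neg_p D N f).symm]
  exact N.neg_add A f (neg_p D N f).symm

theorem neg_unique {X A : C} (x y : X ⟶ D.T.obj A)
    (h1 : x ≫ D.p.app A = y ≫ D.p.app A)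
    (h2 : D.hadd x y = x ≫ D.p.app A ≫ D.zero.app A) :
    y = x ≫ N.neg A := by
  have hxn : x ≫ D.p.app A = (x ≫ N.neg A) ≫ D.p.app A := (neg_p D N x).symm
  calc y = D.hadd y (y ≫ D.p.app A ≫ D.zero.app A) := (hadd_zero_right D _ _ rfl).symm
    _ = D.hadd y (D.hadd x (x ≫ N.neg A)) := by
        rw [hadd_neg D N x]
        simp only [← Category.assoc]
        rw [h1]
    _ = D.hadd (D.hadd y x) (x ≫ N.neg A) := (hadd_assoc D y x _ h1.symm hxn).symm
    _ = D.hadd (D.hadd x y) (x ≫ N.neg A) := by rw [hadd_comm D y x h1.symm]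
    _ = D.hadd (x ≫ D.p.app A ≫ D.zero.app A) (x ≫ N.neg A) := by rw [h2]
    _ = D.hadd (x ≫ N.neg A) (x ≫ D.p.app A ≫ D.zero.app A) := by
        refine hadd_comm D _ _ ?_
        rw [neg_p D N x]
        simp only [Category.assoc, D.zero_p, Functor.id_obj, Category.comp_id]
    _ = x ≫ N.neg A := by
        refine hadd_zero_right D _ _ ?_
        conv_rhs => rw [← Category.assoc, neg_p D N x, Category.assoc]

theorem sub_def {X A : C} (f g : X ⟶ D.T.obj A) :
    D.sub N f g = D.hadd f (g ≫ N.neg A) := rfl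

theorem comp_sub {Y X A : C} (e : Y ⟶ X) (f g : X ⟶ D.T.obj A)
    (h : f ≫ D.p.app A = g ≫ D.p.app A) :
    e ≫ D.sub N f g = D.sub N (e ≫ f) (e ≫ g) := by
  rw [sub_def, sub_def,
    comp_hadd D e f (g ≫ N.neg A) (by rw [neg_p D N g]; exact h),
    ← Category.assoc e g (N.neg A)]

theorem sub_p {X A : C} (f g : X ⟶ D.T.obj A) (h : f ≫ D.p.app A = g ≫ D.p.app A) :
    D.sub N f g ≫ D.p.app A = f ≫ D.p.app A :=
  hadd_p D f _ (by rw [neg_p D N g]; exact h)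

theorem sub_self {X A : C} (f : X ⟶ D.T.obj A) :
    D.sub N f f = f ≫ D.p.app A ≫ D.zero.app A := hadd_neg D N f

theorem sub_hadd_cancel {X A : C} (f g : X ⟶ D.T.obj A)
    (h : f ≫ D.p.app A = g ≫ D.p.app A) :
    D.hadd (D.sub N f g) g = f := by
  rw [sub_def,
    hadd_assoc D f (g ≫ N.neg A) g (by rw [neg_p D N g]; exact h) (neg_p D N g),
    hadd_comm D (g ≫ N.neg A) g (neg_p D N g), hadd_neg D N g]
  refine hadd_zero_right D f _ ?_
  simp only [← Category.assoc]
  rw [h]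

theorem hadd_Tmap {X A B : C} (f : A ⟶ B) (u v : X ⟶ D.T.obj A)
    (h : u ≫ D.p.app A = v ≫ D.p.app A) :
    D.hadd u v ≫ D.T.map f = D.hadd (u ≫ D.T.map f) (v ≫ D.T.map f) := by
  have h' : (u ≫ D.T.map f) ≫ D.p.app B = (v ≫ D.T.map f) ≫ D.p.app B := by
    simp only [Category.assoc, p_nat D f]
    rw [← Category.assoc, h, Category.assoc]
  rw [hadd_of D u v h, hadd_of D _ _ h', Category.assoc]
  exact D.add_nat f u v h h'

theorem Tmap_neg {X A B : C} (f : A ⟶ B) (u : X ⟶ D.T.obj A) :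
    (u ≫ N.neg A) ≫ D.T.map f = (u ≫ D.T.map f) ≫ N.neg B := by
  refine neg_unique D N (u ≫ D.T.map f) _ ?_ ?_
  · simp only [Category.assoc, p_nat D f]
    rw [← Category.assoc (N.neg A), N.neg_p]
  · rw [← hadd_Tmap D f u (u ≫ N.neg A) (neg_p D N u).symm, hadd_neg D N u]
    simp only [Category.assoc]
    rw [← zero_nat D f, p_nat_assoc D f]

theorem sub_Tmap {X A B : C} (f : A ⟶ B) (u v : X ⟶ D.T.obj A)
    (h : u ≫ D.p.app A = v ≫ D.p.app A) :
    D.sub N u v ≫ D.T.map f = D.sub N (u ≫ D.T.map f) (v ≫ D.T.map f) := by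
  rw [sub_def, sub_def,
    hadd_Tmap D f u (v ≫ N.neg A) (by rw [neg_p D N v]; exact h),
    Tmap_neg D N f v]

theorem l_p (A : C) :
    D.l.app A ≫ D.p.app (D.T.obj A) = D.p.app A ≫ D.zero.app A := by
  rw [← D.l_c A, Category.assoc, D.c_p, D.l_Tp]

theorem eq_zero_of_l_eq_zero {X A : C} (x : X ⟶ D.T.obj A)
    (h : x ≫ D.l.app A = x ≫ D.zero.app (D.T.obj A)) :
    x = x ≫ D.p.app A ≫ D.zero.app A := by
  have h2 := congrArg (· ≫ D.p.app (D.T.obj A)) h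
  simp only [Category.assoc] at h2
  rw [l_p D A, D.zero_p (D.T.obj A), Category.comp_id] at h2
  exact h2.symm

theorem hadd_l {X A : C} (f g : X ⟶ D.T.obj A) (h : f ≫ D.p.app A = g ≫ D.p.app A) :
    D.hadd f g ≫ D.l.app A = D.hadd (f ≫ D.l.app A) (g ≫ D.l.app A) := by
  have hTp : (f ≫ D.l.app A) ≫ D.T.map (D.p.app A)
      = (g ≫ D.l.app A) ≫ D.T.map (D.p.app A) := by
    simp only [Category.assoc, D.l_Tp]
    simp only [← Category.assoc]; rw [h]
  have hp1 : ((f ≫ D.l.app A) ≫ D.c.app A) ≫ D.p.app (D.T.obj A)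
      = ((g ≫ D.l.app A) ≫ D.c.app A) ≫ D.p.app (D.T.obj A) := by
    simp only [Category.assoc, D.c_p, D.l_Tp]
    simp only [← Category.assoc]; rw [h]
  have hcond2 : (f ≫ D.l.app A) ≫ D.p.app (D.T.obj A)
      = (g ≫ D.l.app A) ≫ D.p.app (D.T.obj A) := by
    simp only [Category.assoc, l_p D A]
    simp only [← Category.assoc]; rw [h]
  obtain ⟨w, hw0, hw1, hsum⟩ := D.l_add A f g h
  obtain ⟨w', hw0', hw1', hsum'⟩ := D.c_add A (f ≫ D.l.app A) (g ≫ D.l.app A) hTp hp1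
  have hww : w' = w := (D.T2T A).hom_ext _ _ (by rw [hw0', hw0]) (by rw [hw1', hw1])
  have e1 : D.hadd f g ≫ D.l.app A = w ≫ D.T.map (D.add A) := by
    rw [hadd_of D f g h, Category.assoc]; exact hsum
  have e2 : (w ≫ D.T.map (D.add A)) ≫ D.c.app A
      = D.hadd (f ≫ D.l.app A) (g ≫ D.l.app A) := by
    rw [← hww, Category.assoc, hsum',
      pb_pair_congr (D.T2 (D.T.obj A)) (by rw [Category.assoc, D.l_c])
        (by rw [Category.assoc, D.l_c]) hp1 hcond2, ← hadd_of D _ _ hcond2]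
  calc D.hadd f g ≫ D.l.app A
      = (D.hadd f g ≫ D.l.app A) ≫ D.c.app A := by rw [Category.assoc, D.l_c]
    _ = (w ≫ D.T.map (D.add A)) ≫ D.c.app A := by rw [e1]
    _ = D.hadd (f ≫ D.l.app A) (g ≫ D.l.app A) := e2

theorem vert_cond {X A : C} (m n : X ⟶ D.T.obj A) (h : m ≫ D.p.app A = n ≫ D.p.app A) :
    (m ≫ D.l.app A) ≫ D.T.map (D.p.app A)
      = (n ≫ D.zero.app (D.T.obj A)) ≫ D.T.map (D.p.app A) := by
  simp only [Category.assoc, D.l_Tp]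
  rw [← zero_nat D (D.p.app A)]
  simp only [Functor.id_obj]
  simp only [← Category.assoc]; rw [h]

theorem pair_vmu {X A : C} (m n : X ⟶ D.T.obj A) (h : m ≫ D.p.app A = n ≫ D.p.app A) :
    (D.T2 A).pair m n h ≫ D.vmu A
      = (D.T2T A).pair (m ≫ D.l.app A) (n ≫ D.zero.app (D.T.obj A)) (vert_cond D m n h)
          ≫ D.T.map (D.add A) := by
  obtain ⟨w, hw0, hw1, hw⟩ := D.vmu_spec A
  rw [hw, ← Category.assoc]
  congr 1
  refine (D.T2T A).hom_ext _ _ ?_ ?_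
  · rw [Category.assoc, hw0, (D.T2T A).pair_pr0, ← Category.assoc, (D.T2 A).pair_pr0]
  · rw [Category.assoc, hw1, (D.T2T A).pair_pr1, ← Category.assoc, (D.T2 A).pair_pr1]

theorem vmu_p (A : C) : D.vmu A ≫ D.p.app (D.T.obj A) = (D.T2 A).pr1 := by
  obtain ⟨w, hw0, hw1, hw⟩ := D.vmu_spec A
  have hzc : ((D.T2 A).pr1 ≫ D.p.app A ≫ D.zero.app A) ≫ D.p.app A
      = (D.T2 A).pr1 ≫ D.p.app A := by
    simp only [Category.assoc, D.zero_p, Functor.id_obj, Category.comp_id]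
  have hwp : w ≫ D.p.app (D.T2 A).P
      = (D.T2 A).pair ((D.T2 A).pr1 ≫ D.p.app A ≫ D.zero.app A) (D.T2 A).pr1 hzc := by
    refine (D.T2 A).hom_ext _ _ ?_ ?_
    · rw [Category.assoc, ← p_nat D (D.T2 A).pr0, ← Category.assoc, hw0, Category.assoc,
        l_p D A, (D.T2 A).pair_pr0]
      simp only [← Category.assoc]
      rw [(D.T2 A).comm]
    · rw [Category.assoc, ← p_nat D (D.T2 A).pr1, ← Category.assoc, hw1, Category.assoc,
        D.zero_p, (D.T2 A).pair_pr1]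
      simp only [Functor.id_obj, Category.comp_id]
  rw [hw, Category.assoc, p_nat D (D.add A), ← Category.assoc, hwp,
    D.add_comm' A _ _ hzc]
  exact D.add_zero' A (D.T2 A).pr1 _

section VC

variable {M : C} (K : D.T.obj (D.T.obj M) ⟶ D.T.obj M)

theorem l_cancel {X : C} (hK1 : D.l.app M ≫ K = 𝟙 (D.T.obj M))
    {x y : X ⟶ D.T.obj M} (h : x ≫ D.l.app M = y ≫ D.l.app M) : x = y := by
  have h2 := congrArg (· ≫ K) h
  simpa only [Category.assoc, hK1, Category.comp_id] using h2

theorem zeroTM_K (hK : IsVerticalConnection D (D.p.app M) (D.l.app M) K) :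
    D.zero.app (D.T.obj M) ≫ K = D.p.app M ≫ D.zero.app M := by
  obtain ⟨hK1, hK2, hK3, hK4⟩ := hK
  have hzz := zero_nat D (D.zero.app (D.T.obj M))
  simp only [Functor.id_obj] at hzz
  have h1 : (D.zero.app (D.T.obj M) ≫ K) ≫ D.l.app M
      = (D.zero.app (D.T.obj M) ≫ K) ≫ D.zero.app (D.T.obj M) := by
    conv_lhs => rw [Category.assoc, hK3, ← Category.assoc, D.l_zero (D.T.obj M)]
    conv_rhs => rw [Category.assoc, zero_nat D K, ← Category.assoc, hzz]
  have h2 := eq_zero_of_l_eq_zero D _ h1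
  have h3 : (D.zero.app (D.T.obj M) ≫ K) ≫ D.p.app M = D.p.app M := by
    rw [Category.assoc, hK2, ← Category.assoc, D.zero_p (D.T.obj M)]
    exact Category.id_comp _
  rw [h2, ← Category.assoc, h3]

theorem hadd_K (hK : IsVerticalConnection D (D.p.app M) (D.l.app M) K) {X : C}
    (a b : X ⟶ D.T.obj (D.T.obj M))
    (h : a ≫ D.p.app (D.T.obj M) = b ≫ D.p.app (D.T.obj M)) :
    D.hadd a b ≫ K = D.hadd (a ≫ K) (b ≫ K) := by
  obtain ⟨hK1, hK2, hK3, hK4⟩ := hK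
  have hab : (a ≫ K) ≫ D.p.app M = (b ≫ K) ≫ D.p.app M := by
    simp only [Category.assoc, hK2]
    simp only [← Category.assoc]; rw [h]
  have hl1 : (a ≫ D.l.app (D.T.obj M)) ≫ D.p.app (D.T.obj (D.T.obj M))
      = (b ≫ D.l.app (D.T.obj M)) ≫ D.p.app (D.T.obj (D.T.obj M)) := by
    simp only [Category.assoc, l_p D (D.T.obj M)]
    simp only [← Category.assoc]; rw [h]
  refine l_cancel D K hK1 ?_
  calc (D.hadd a b ≫ K) ≫ D.l.app M
      = D.hadd a b ≫ D.l.app (D.T.obj M) ≫ D.T.map K := by rw [Category.assoc, hK3]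
    _ = D.hadd (a ≫ D.l.app (D.T.obj M)) (b ≫ D.l.app (D.T.obj M)) ≫ D.T.map K := by
        rw [← Category.assoc, hadd_l D a b h]
    _ = D.hadd ((a ≫ D.l.app (D.T.obj M)) ≫ D.T.map K)
          ((b ≫ D.l.app (D.T.obj M)) ≫ D.T.map K) :=
        hadd_Tmap D K _ _ hl1
    _ = D.hadd (a ≫ K ≫ D.l.app M) (b ≫ K ≫ D.l.app M) := by
        simp only [Category.assoc, ← hK3]
    _ = (D.hadd (a ≫ K) (b ≫ K)) ≫ D.l.app M := by
        rw [hadd_l D (a ≫ K) (b ≫ K) hab]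
        simp only [Category.assoc]

theorem pair_vmu_K (hK : IsVerticalConnection D (D.p.app M) (D.l.app M) K)
    (htf : D.c.app M ≫ K = K) {X : C} (m n : X ⟶ D.T.obj M)
    (h : m ≫ D.p.app M = n ≫ D.p.app M) :
    ((D.T2 M).pair m n h ≫ D.vmu M) ≫ K = m := by
  have hTp := vert_cond D m n h
  have hc3 : ((m ≫ D.l.app M) ≫ D.c.app M) ≫ D.p.app (D.T.obj M)
      = ((n ≫ D.zero.app (D.T.obj M)) ≫ D.c.app M) ≫ D.p.app (D.T.obj M) := by
    simp only [Category.assoc, D.c_p]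
    simpa only [Category.assoc] using hTp
  obtain ⟨w, hw0, hw1, hwc⟩ :=
    D.c_add M (m ≫ D.l.app M) (n ≫ D.zero.app (D.T.obj M)) hTp hc3
  have hww : w = (D.T2T M).pair (m ≫ D.l.app M) (n ≫ D.zero.app (D.T.obj M)) hTp :=
    (D.T2T M).hom_ext _ _ (by rw [hw0, (D.T2T M).pair_pr0])
      (by rw [hw1, (D.T2T M).pair_pr1])
  have hz1 : (n ≫ D.zero.app (D.T.obj M)) ≫ D.c.app M = n ≫ D.T.map (D.zero.app M) := by
    simp only [Category.assoc]
    rw [← D.c_zero M]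
    simp only [Category.assoc, D.c_c, Category.comp_id]
  have hl1 : (m ≫ D.l.app M) ≫ D.c.app M = m ≫ D.l.app M := by
    rw [Category.assoc, D.l_c]
  have hmlp : (m ≫ D.l.app M) ≫ D.p.app (D.T.obj M)
      = (n ≫ D.T.map (D.zero.app M)) ≫ D.p.app (D.T.obj M) := by
    rw [Category.assoc, l_p D M, Category.assoc, p_nat D (D.zero.app M)]
    simp only [Functor.id_obj]
    simp only [← Category.assoc]; rw [h]
  have hθc : ((D.T2 M).pair m n h ≫ D.vmu M) ≫ D.c.app M
      = D.hadd (m ≫ D.l.app M) (n ≫ D.T.map (D.zero.app M)) := by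
    rw [pair_vmu D m n h, ← hww, Category.assoc, hwc,
      pb_pair_congr (D.T2 (D.T.obj M)) hl1 hz1 hc3 hmlp, ← hadd_of D _ _ hmlp]
  have hT0K : D.T.map (D.zero.app M) ≫ K = D.p.app M ≫ D.zero.app M := by
    rw [← htf, ← Category.assoc, D.c_zero, zeroTM_K D K hK]
  obtain ⟨hK1, hK2, hK3, hK4⟩ := hK
  calc ((D.T2 M).pair m n h ≫ D.vmu M) ≫ K
      = ((D.T2 M).pair m n h ≫ D.vmu M) ≫ D.c.app M ≫ K := by rw [htf]
    _ = D.hadd (m ≫ D.l.app M) (n ≫ D.T.map (D.zero.app M)) ≫ K := by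
        rw [← Category.assoc, hθc]
    _ = D.hadd ((m ≫ D.l.app M) ≫ K) ((n ≫ D.T.map (D.zero.app M)) ≫ K) :=
        hadd_K D K ⟨hK1, hK2, hK3, hK4⟩ _ _ hmlp
    _ = D.hadd m (n ≫ D.p.app M ≫ D.zero.app M) := by
        rw [Category.assoc, hK1, Category.comp_id, Category.assoc, hT0K]
    _ = m := by
        refine hadd_zero_right D m _ ?_
        simp only [← Category.assoc]; rw [← h]

theorem vert_hadd_K (hK : IsVerticalConnection D (D.p.app M) (D.l.app M) K)
    (htf : D.c.app M ≫ K = K) {X : C} (m n : X ⟶ D.T.obj M)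
    (h : m ≫ D.p.app M = n ≫ D.p.app M) (y : X ⟶ D.T.obj (D.T.obj M))
    (hy : y ≫ D.p.app (D.T.obj M) = n) :
    D.hadd ((D.T2 M).pair m n h ≫ D.vmu M) y ≫ K = D.hadd m (y ≫ K) := by
  have hθp : ((D.T2 M).pair m n h ≫ D.vmu M) ≫ D.p.app (D.T.obj M)
      = y ≫ D.p.app (D.T.obj M) := by
    rw [Category.assoc, vmu_p D M, (D.T2 M).pair_pr1, hy]
  rw [hadd_K D K hK _ _ hθp, pair_vmu_K D K hK htf m n h]

theorem pair_vmu_Tlin (f : D.T.obj M ⟶ D.T.obj M)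
    (hfp : f ≫ D.p.app M = D.p.app M)
    (hfl : D.l.app M ≫ D.T.map f = f ≫ D.l.app M)
    (hfadd : ∀ {Y : C} (u v : Y ⟶ D.T.obj M),
      u ≫ D.p.app M = v ≫ D.p.app M → D.hadd u v ≫ f = D.hadd (u ≫ f) (v ≫ f))
    {X : C} (m n : X ⟶ D.T.obj M) (h : m ≫ D.p.app M = n ≫ D.p.app M)
    (h' : (m ≫ f) ≫ D.p.app M = (n ≫ f) ≫ D.p.app M) :
    ((D.T2 M).pair m n h ≫ D.vmu M) ≫ D.T.map f
      = (D.T2 M).pair (m ≫ f) (n ≫ f) h' ≫ D.vmu M := by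
  have hpr : (D.T2 M).pr0 ≫ D.p.app M = (D.T2 M).pr1 ≫ D.p.app M := (D.T2 M).comm
  have hprf : ((D.T2 M).pr0 ≫ f) ≫ D.p.app M = ((D.T2 M).pr1 ≫ f) ≫ D.p.app M := by
    simp only [Category.assoc, hfp]; exact hpr
  have hid : (D.T2 M).pair (D.T2 M).pr0 (D.T2 M).pr1 hpr = 𝟙 (D.T2 M).P :=
    (D.T2 M).hom_ext _ _ (by rw [(D.T2 M).pair_pr0, Category.id_comp])
      (by rw [(D.T2 M).pair_pr1, Category.id_comp])
  have harrow : D.add M ≫ f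
      = (D.T2 M).pair ((D.T2 M).pr0 ≫ f) ((D.T2 M).pr1 ≫ f) hprf ≫ D.add M := by
    have h1 := hfadd (D.T2 M).pr0 (D.T2 M).pr1 hpr
    rw [hadd_of D _ _ hpr, hid, Category.id_comp, hadd_of D _ _ hprf] at h1
    exact h1
  rw [pair_vmu D m n h, pair_vmu D (m ≫ f) (n ≫ f) h', Category.assoc, ← D.T.map_comp,
    harrow, D.T.map_comp, ← Category.assoc]
  congr 1
  refine (D.T2T M).hom_ext _ _ ?_ ?_
  · rw [Category.assoc, ← D.T.map_comp, (D.T2 M).pair_pr0, D.T.map_comp, ← Category.assoc,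
      (D.T2T M).pair_pr0, (D.T2T M).pair_pr0, Category.assoc, hfl, ← Category.assoc]
  · rw [Category.assoc, ← D.T.map_comp, (D.T2 M).pair_pr1, D.T.map_comp, ← Category.assoc,
      (D.T2T M).pair_pr1, (D.T2T M).pair_pr1, Category.assoc, ← zero_nat D f,
      ← Category.assoc]

end VC

theorem c_Tp (A : C) :
    D.c.app A ≫ D.T.map (D.p.app A) = D.p.app (D.T.obj A) := by
  rw [← D.c_p, ← Category.assoc, D.c_c]
  exact Category.id_comp _

abbrev Sect (D : TangentCat C) (M : C) : Type _ :=
  {f : M ⟶ D.T.obj M // f ≫ D.p.app M = 𝟙 M}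

noncomputable def sectGroup (D : TangentCat C) (N : HasNegatives D) (M : C) :
    AddCommGroup (Sect D M) :=
  letI : Add (Sect D M) :=
    ⟨fun a b => ⟨D.hadd a.1 b.1, by rw [hadd_p D a.1 b.1 (by rw [a.2, b.2]), a.2]⟩⟩
  letI : Zero (Sect D M) := ⟨⟨D.zero.app M, D.zero_p M⟩⟩
  letI : Neg (Sect D M) := ⟨fun a => ⟨a.1 ≫ N.neg M, by rw [neg_p D N a.1, a.2]⟩⟩
  { add := (· + ·)
    zero := 0
    neg := Neg.neg
    nsmul := nsmulRec
    zsmul := zsmulRec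
    add_assoc := fun a b c => Subtype.ext
      (hadd_assoc D a.1 b.1 c.1 (by rw [a.2, b.2]) (by rw [b.2, c.2]))
    add_comm := fun a b => Subtype.ext (hadd_comm D a.1 b.1 (by rw [a.2, b.2]))
    zero_add := fun a => Subtype.ext (by
      show D.hadd (D.zero.app M) a.1 = a.1
      rw [hadd_comm D _ _ (by rw [D.zero_p, a.2])]
      refine hadd_zero_right D a.1 _ ?_
      rw [← Category.assoc, a.2]
      exact (Category.id_comp _).symm)
    add_zero := fun a => Subtype.ext (by
      show D.hadd a.1 (D.zero.app M) = a.1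
      refine hadd_zero_right D a.1 _ ?_
      rw [← Category.assoc, a.2]
      exact (Category.id_comp _).symm)
    neg_add_cancel := fun a => Subtype.ext (by
      show D.hadd (a.1 ≫ N.neg M) a.1 = D.zero.app M
      rw [hadd_comm D _ _ (neg_p D N a.1), hadd_neg D N a.1, ← Category.assoc, a.2]
      exact Category.id_comp _) }

end Stmt7Aux

open Stmt7Aux in
/-- In a tangent category with negatives, if `K` is a
torsion-free affine vertical connection (`cK = K`), then for vector fields
`w₁, w₂, s` on `M`, the curvature tensor satisfies
`R_K(w₁,w₂,s) = ∇²_K(w₁,w₂,s) − ∇²_K(w₂,w₁,s)`, where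
`∇²_K(w₁,w₂,s) = ∇_K(w₁,∇_K(w₂,s)) − ∇_K(∇_K(w₁,w₂),s)`. -/
theorem stmt7 (D : TangentCat C) (N : HasNegatives D) {M : C}
    (K : D.T.obj (D.T.obj M) ⟶ D.T.obj M)
    (hK : IsVerticalConnection D (D.p.app M) (D.l.app M) K)
    (htf : D.c.app M ≫ K = K)
    (w1 w2 s : M ⟶ D.T.obj M) (hw1 : w1 ≫ D.p.app M = 𝟙 M)
    (hw2 : w2 ≫ D.p.app M = 𝟙 M) (hs : s ≫ D.p.app M = 𝟙 M) :
    w2 ≫ D.T.map w1 ≫ D.T.map (D.T.map s) ≫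
        D.sub N (D.c.app (D.T.obj M) ≫ D.T.map K ≫ K) (D.T.map K ≫ K)
      = D.sub N
          (D.sub N (nabla D K w1 (nabla D K w2 s)) (nabla D K (nabla D K w1 w2) s))
          (D.sub N (nabla D K w2 (nabla D K w1 s)) (nabla D K (nabla D K w2 w1) s)) := by
  have hK1 := hK.1
  have hK2 := hK.2.1
  have hK3 := hK.2.2.1
  -- basic projection facts
  have hξ₁p : (w1 ≫ D.T.map w2) ≫ D.p.app (D.T.obj M) = w2 := by
    rw [Category.assoc, p_nat D w2, ← Category.assoc, hw1, Category.id_comp]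
  have hηp : (w2 ≫ D.T.map w1) ≫ D.p.app (D.T.obj M) = w1 := by
    rw [Category.assoc, p_nat D w1, ← Category.assoc, hw2, Category.id_comp]
  have hξ₂p : ((w2 ≫ D.T.map w1) ≫ D.c.app M) ≫ D.p.app (D.T.obj M) = w2 := by
    rw [Category.assoc, D.c_p, Category.assoc, ← D.T.map_comp, hw1, D.T.map_id,
      Category.comp_id]
  have hsub12 : (w1 ≫ D.T.map w2) ≫ D.p.app (D.T.obj M)
      = ((w2 ≫ D.T.map w1) ≫ D.c.app M) ≫ D.p.app (D.T.obj M) := by rw [hξ₁p, hξ₂p]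
  have hsecK : ∀ {Y : C} (x : Y ⟶ D.T.obj (D.T.obj M)),
      (x ≫ K) ≫ D.p.app M = (x ≫ D.p.app (D.T.obj M)) ≫ D.p.app M := by
    intro Y x; rw [Category.assoc, hK2, ← Category.assoc]
  -- the map h := T(s) ≫ K
  have hhp : (D.T.map s ≫ K) ≫ D.p.app M = D.p.app M := by
    rw [Category.assoc, hK2, ← Category.assoc, p_nat D s, Category.assoc, hs]
    exact Category.comp_id _
  have hhl : D.l.app M ≫ D.T.map (D.T.map s ≫ K) = (D.T.map s ≫ K) ≫ D.l.app M := by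
    rw [D.T.map_comp, ← Category.assoc, ← l_nat D s, Category.assoc, ← hK3,
      ← Category.assoc]
  have hhadd : ∀ {Y : C} (u v : Y ⟶ D.T.obj M),
      u ≫ D.p.app M = v ≫ D.p.app M →
      D.hadd u v ≫ (D.T.map s ≫ K)
        = D.hadd (u ≫ (D.T.map s ≫ K)) (v ≫ (D.T.map s ≫ K)) := by
    intro Y u v huv
    have hTs : (u ≫ D.T.map s) ≫ D.p.app (D.T.obj M)
        = (v ≫ D.T.map s) ≫ D.p.app (D.T.obj M) := by
      simp only [Category.assoc, p_nat D s]
      simp only [← Category.assoc]; rw [huv]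
    rw [← Category.assoc, hadd_Tmap D s u v huv, hadd_K D K hK _ _ hTs]
    simp only [Category.assoc]
  -- the vertical part of ξ₁ - ξ₂
  have hδTp : D.sub N (w1 ≫ D.T.map w2) ((w2 ≫ D.T.map w1) ≫ D.c.app M)
        ≫ D.T.map (D.p.app M) = D.zero.app M := by
    rw [sub_Tmap D N (D.p.app M) _ _ hsub12]
    have e1 : (w1 ≫ D.T.map w2) ≫ D.T.map (D.p.app M) = w1 := by
      rw [Category.assoc, ← D.T.map_comp, hw2, D.T.map_id, Category.comp_id]
    have e2 : ((w2 ≫ D.T.map w1) ≫ D.c.app M) ≫ D.T.map (D.p.app M) = w1 := by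
      rw [Category.assoc, c_Tp D M, hηp]
    rw [e1, e2, sub_self D N w1, ← Category.assoc, hw1, Category.id_comp]
  have hδvert : D.sub N (w1 ≫ D.T.map w2) ((w2 ≫ D.T.map w1) ≫ D.c.app M)
        ≫ D.T.map (D.p.app M)
      = D.sub N (w1 ≫ D.T.map w2) ((w2 ≫ D.T.map w1) ≫ D.c.app M)
        ≫ D.T.map (D.p.app M) ≫ D.p.app M ≫ D.zero.app M := by
    conv_rhs => rw [← Category.assoc, hδTp, zero_p_assoc D]
    exact hδTp
  have hVvmu : D.vlift _ hδvert ≫ D.vmu M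
      = D.sub N (w1 ≫ D.T.map w2) ((w2 ≫ D.T.map w1) ≫ D.c.app M) :=
    D.vlift_vmu _ hδvert
  have hδp1 : D.sub N (w1 ≫ D.T.map w2) ((w2 ≫ D.T.map w1) ≫ D.c.app M)
      ≫ D.p.app (D.T.obj M) = w2 := by
    rw [sub_p D N _ _ hsub12, hξ₁p]
  have hV1 : D.vlift _ hδvert ≫ (D.T2 M).pr1 = w2 := by
    rw [← vmu_p D M, ← Category.assoc, hVvmu, hδp1]
  have hβp : (D.vlift _ hδvert ≫ (D.T2 M).pr0) ≫ D.p.app M = 𝟙 M := by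
    rw [Category.assoc, (D.T2 M).comm, ← Category.assoc, hV1, hw2]
  have hβw2 : (D.vlift _ hδvert ≫ (D.T2 M).pr0) ≫ D.p.app M = w2 ≫ D.p.app M := by
    rw [hβp, hw2]
  have hVpair : D.vlift _ hδvert
      = (D.T2 M).pair (D.vlift _ hδvert ≫ (D.T2 M).pr0) w2 hβw2 :=
    (D.T2 M).hom_ext _ _ (by rw [(D.T2 M).pair_pr0]) (by rw [(D.T2 M).pair_pr1, hV1])
  have hδpair : (D.T2 M).pair (D.vlift _ hδvert ≫ (D.T2 M).pr0) w2 hβw2 ≫ D.vmu M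
      = D.sub N (w1 ≫ D.T.map w2) ((w2 ≫ D.T.map w1) ≫ D.c.app M) := by
    rw [← hVpair]; exact hVvmu
  have hξ₁dec : w1 ≫ D.T.map w2
      = D.hadd ((D.T2 M).pair (D.vlift _ hδvert ≫ (D.T2 M).pr0) w2 hβw2 ≫ D.vmu M)
          ((w2 ≫ D.T.map w1) ≫ D.c.app M) := by
    rw [hδpair]
    exact (sub_hadd_cancel D N _ _ hsub12).symm
  set β : M ⟶ D.T.obj M := D.vlift _ hδvert ≫ (D.T2 M).pr0 with hβdef
  -- key decomposition identities
  have hξ₁K : (w1 ≫ D.T.map w2) ≫ K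
      = D.hadd β (((w2 ≫ D.T.map w1) ≫ D.c.app M) ≫ K) := by
    rw [hξ₁dec, vert_hadd_K D K hK htf β w2 hβw2 _ hξ₂p]
  have hβhp : (β ≫ (D.T.map s ≫ K)) ≫ D.p.app M
      = (w2 ≫ (D.T.map s ≫ K)) ≫ D.p.app M := by
    have l1 : (β ≫ (D.T.map s ≫ K)) ≫ D.p.app M = β ≫ D.p.app M := by
      rw [Category.assoc, hhp]
    have l2 : (w2 ≫ (D.T.map s ≫ K)) ≫ D.p.app M = w2 ≫ D.p.app M := by
      rw [Category.assoc, hhp]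
    rw [l1, l2, hβw2]
  have hθTh : ((D.T2 M).pair β w2 hβw2 ≫ D.vmu M) ≫ D.T.map (D.T.map s ≫ K)
      = (D.T2 M).pair (β ≫ (D.T.map s ≫ K)) (w2 ≫ (D.T.map s ≫ K)) hβhp ≫ D.vmu M :=
    pair_vmu_Tlin D (D.T.map s ≫ K) hhp hhl (fun u v huv => hhadd u v huv) β w2 hβw2 hβhp
  have cond1 : ((D.T2 M).pair β w2 hβw2 ≫ D.vmu M) ≫ D.p.app (D.T.obj M)
      = ((w2 ≫ D.T.map w1) ≫ D.c.app M) ≫ D.p.app (D.T.obj M) := by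
    rw [Category.assoc, vmu_p D M, (D.T2 M).pair_pr1, hξ₂p]
  have hyTh : (((w2 ≫ D.T.map w1) ≫ D.c.app M) ≫ D.T.map (D.T.map s ≫ K))
        ≫ D.p.app (D.T.obj M) = w2 ≫ (D.T.map s ≫ K) := by
    rw [Category.assoc, p_nat D (D.T.map s ≫ K), ← Category.assoc, hξ₂p]
  have hX : ((w1 ≫ D.T.map w2) ≫ D.T.map (D.T.map s ≫ K)) ≫ K
      = D.hadd (β ≫ (D.T.map s ≫ K))
          ((((w2 ≫ D.T.map w1) ≫ D.c.app M) ≫ D.T.map (D.T.map s ≫ K)) ≫ K) := by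
    rw [hξ₁dec, hadd_Tmap D (D.T.map s ≫ K) _ _ cond1, hθTh,
      vert_hadd_K D K hK htf _ _ hβhp _ hyTh]
  have cond2 : β ≫ D.p.app M = (((w2 ≫ D.T.map w1) ≫ D.c.app M) ≫ K) ≫ D.p.app M := by
    rw [hβw2, hsecK, hξ₂p]
  have hY : ((w1 ≫ D.T.map w2) ≫ K) ≫ (D.T.map s ≫ K)
      = D.hadd (β ≫ (D.T.map s ≫ K))
          ((((w2 ≫ D.T.map w1) ≫ D.c.app M) ≫ K) ≫ (D.T.map s ≫ K)) := by
    rw [hξ₁K, hhadd β _ cond2]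
  have htfa : ∀ {Y' : C} (g : D.T.obj M ⟶ Y'), D.c.app M ≫ K ≫ g = K ≫ g := by
    intro Y' g; rw [← Category.assoc, htf]
  -- section properties
  have hB : (β ≫ (D.T.map s ≫ K)) ≫ D.p.app M = 𝟙 M := by
    rw [Category.assoc, hhp, hβp]
  have hP : ((((w2 ≫ D.T.map w1) ≫ D.c.app M) ≫ D.T.map (D.T.map s ≫ K)) ≫ K)
      ≫ D.p.app M = 𝟙 M := by
    rw [hsecK, hyTh, Category.assoc, hhp, hw2]
  have hZTh : ((w2 ≫ D.T.map w1) ≫ D.T.map (D.T.map s ≫ K)) ≫ D.p.app (D.T.obj M)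
      = w1 ≫ (D.T.map s ≫ K) := by
    rw [Category.assoc, p_nat D (D.T.map s ≫ K), ← Category.assoc, hηp]
  have hZ : (((w2 ≫ D.T.map w1) ≫ D.T.map (D.T.map s ≫ K)) ≫ K) ≫ D.p.app M = 𝟙 M := by
    rw [hsecK, hZTh, Category.assoc, hhp, hw1]
  have hW : ((((w2 ≫ D.T.map w1) ≫ D.c.app M) ≫ K) ≫ (D.T.map s ≫ K)) ≫ D.p.app M
      = 𝟙 M := by
    rw [Category.assoc, hhp, hsecK, hξ₂p, hw2]
  -- base condition for precomposition into sub
  have hTp_p : D.T.map (D.p.app (D.T.obj M)) ≫ D.p.app (D.T.obj M)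
      = D.p.app (D.T.obj (D.T.obj M)) ≫ D.p.app (D.T.obj M) := by
    have h0 := p_nat D (D.p.app (D.T.obj M))
    simpa only [Functor.id_obj] using h0
  have hbase : (D.c.app (D.T.obj M) ≫ D.T.map K ≫ K) ≫ D.p.app M
      = (D.T.map K ≫ K) ≫ D.p.app M := by
    calc (D.c.app (D.T.obj M) ≫ D.T.map K ≫ K) ≫ D.p.app M
        = D.c.app (D.T.obj M) ≫ D.T.map K ≫ K ≫ D.p.app M := by
          simp only [Category.assoc]
      _ = D.c.app (D.T.obj M) ≫ D.T.map K ≫ D.p.app (D.T.obj M) ≫ D.p.app M := by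
          rw [hK2]
      _ = D.c.app (D.T.obj M) ≫ D.p.app (D.T.obj (D.T.obj M)) ≫ K ≫ D.p.app M := by
          rw [p_nat_assoc D K]
      _ = D.c.app (D.T.obj M) ≫ D.p.app (D.T.obj (D.T.obj M)) ≫ D.p.app (D.T.obj M)
            ≫ D.p.app M := by rw [hK2]
      _ = D.T.map (D.p.app (D.T.obj M)) ≫ D.p.app (D.T.obj M) ≫ D.p.app M := by
          rw [c_p_assoc D]
      _ = (D.p.app (D.T.obj (D.T.obj M)) ≫ D.p.app (D.T.obj M)) ≫ D.p.app M := by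
          rw [← Category.assoc, hTp_p]
      _ = (D.T.map K ≫ K) ≫ D.p.app M := by
          simp only [Category.assoc]
          rw [hK2, p_nat_assoc D K, hK2]
  have hbase2 : (D.T.map (D.T.map s) ≫ D.c.app (D.T.obj M) ≫ D.T.map K ≫ K) ≫ D.p.app M
      = (D.T.map (D.T.map s) ≫ D.T.map K ≫ K) ≫ D.p.app M := by
    rw [Category.assoc, hbase, ← Category.assoc]
  have hbase3 : (D.T.map w1 ≫ D.T.map (D.T.map s) ≫ D.c.app (D.T.obj M) ≫ D.T.map K ≫ K)
        ≫ D.p.app M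
      = (D.T.map w1 ≫ D.T.map (D.T.map s) ≫ D.T.map K ≫ K) ≫ D.p.app M := by
    rw [Category.assoc, hbase2, ← Category.assoc]
  -- rewrite goal left-hand side
  rw [comp_sub D N (D.T.map (D.T.map s)) _ _ hbase,
    comp_sub D N (D.T.map w1) _ _ hbase2,
    comp_sub D N w2 _ _ hbase3]
  -- identify composites
  have hACK : w2 ≫ D.T.map w1 ≫ D.T.map (D.T.map s) ≫ D.c.app (D.T.obj M) ≫ D.T.map K ≫ K
      = (((w2 ≫ D.T.map w1) ≫ D.c.app M) ≫ D.T.map (D.T.map s ≫ K)) ≫ K := by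
    rw [D.T.map_comp]
    simp only [Category.assoc]
    rw [c_nat_assoc D s]
  have hATK : w2 ≫ D.T.map w1 ≫ D.T.map (D.T.map s) ≫ D.T.map K ≫ K
      = ((w2 ≫ D.T.map w1) ≫ D.T.map (D.T.map s ≫ K)) ≫ K := by
    rw [D.T.map_comp]
    simp only [Category.assoc]
  rw [hACK, hATK]
  -- identify the nabla composites
  have hnab1 : nabla D K w1 (nabla D K w2 s)
      = ((w1 ≫ D.T.map w2) ≫ D.T.map (D.T.map s ≫ K)) ≫ K := by
    show w1 ≫ D.T.map (w2 ≫ D.T.map s ≫ K) ≫ K = _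
    simp only [Functor.map_comp, Category.assoc]
  have hnab2 : nabla D K (nabla D K w1 w2) s
      = ((w1 ≫ D.T.map w2) ≫ K) ≫ (D.T.map s ≫ K) := by
    show (w1 ≫ D.T.map w2 ≫ K) ≫ D.T.map s ≫ K = _
    simp only [Category.assoc]
  have hnab3 : nabla D K w2 (nabla D K w1 s)
      = ((w2 ≫ D.T.map w1) ≫ D.T.map (D.T.map s ≫ K)) ≫ K := by
    show w2 ≫ D.T.map (w1 ≫ D.T.map s ≫ K) ≫ K = _
    simp only [Functor.map_comp, Category.assoc]
  have hnab4 : nabla D K (nabla D K w2 w1) s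
      = (((w2 ≫ D.T.map w1) ≫ D.c.app M) ≫ K) ≫ (D.T.map s ≫ K) := by
    show (w2 ≫ D.T.map w1 ≫ K) ≫ D.T.map s ≫ K = _
    simp only [Category.assoc]
    rw [htfa]
  rw [hnab1, hnab2, hnab3, hnab4]
  -- final abelian-group computation
  letI : AddCommGroup (Stmt7Aux.Sect D M) := Stmt7Aux.sectGroup D N M
  have habel : ∀ (b p2 z w : Stmt7Aux.Sect D M), p2 - z = ((b + p2) - (b + w)) - (z - w) := by
    intro b p2 z w; abel
  calc D.sub N ((((w2 ≫ D.T.map w1) ≫ D.c.app M) ≫ D.T.map (D.T.map s ≫ K)) ≫ K)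
        (((w2 ≫ D.T.map w1) ≫ D.T.map (D.T.map s ≫ K)) ≫ K)
      = ((⟨_, hP⟩ : Stmt7Aux.Sect D M) - (⟨_, hZ⟩ : Stmt7Aux.Sect D M)).1 := rfl
    _ = ((((⟨_, hB⟩ : Stmt7Aux.Sect D M) + (⟨_, hP⟩ : Stmt7Aux.Sect D M))
          - ((⟨_, hB⟩ : Stmt7Aux.Sect D M) + (⟨_, hW⟩ : Stmt7Aux.Sect D M)))
          - ((⟨_, hZ⟩ : Stmt7Aux.Sect D M) - (⟨_, hW⟩ : Stmt7Aux.Sect D M))).1 := by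
        rw [habel ⟨_, hB⟩ ⟨_, hP⟩ ⟨_, hZ⟩ ⟨_, hW⟩]
    _ = D.sub N
          (D.sub N
            (D.hadd (β ≫ (D.T.map s ≫ K))
              ((((w2 ≫ D.T.map w1) ≫ D.c.app M) ≫ D.T.map (D.T.map s ≫ K)) ≫ K))
            (D.hadd (β ≫ (D.T.map s ≫ K))
              ((((w2 ≫ D.T.map w1) ≫ D.c.app M) ≫ K) ≫ (D.T.map s ≫ K))))
          (D.sub N (((w2 ≫ D.T.map w1) ≫ D.T.map (D.T.map s ≫ K)) ≫ K)
            ((((w2 ≫ D.T.map w1) ≫ D.c.app M) ≫ K) ≫ (D.T.map s ≫ K))) := rfl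
    _ = D.sub N
          (D.sub N (((w1 ≫ D.T.map w2) ≫ D.T.map (D.T.map s ≫ K)) ≫ K)
            (((w1 ≫ D.T.map w2) ≫ K) ≫ (D.T.map s ≫ K)))
          (D.sub N (((w2 ≫ D.T.map w1) ≫ D.T.map (D.T.map s ≫ K)) ≫ K)
            ((((w2 ≫ D.T.map w1) ≫ D.c.app M) ≫ K) ≫ (D.T.map s ≫ K))) := by
        rw [← hX, ← hY]
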